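/- Let I be a repeated matching instance with n agents/items and T rounds such that T mod n = n − 1, and in which all valuations are non-negative (goods), i.e., v_i(g,t) ≥ 0 for every agent i, item g, and t ∈ {1,...,T}. Then there exists a repeated matching of I that is EF1. -/

import Mathlib

/-!
Match agent `i` to item `i + t` in round `t`. Writing `T = q n + (n - 1)`, agent `i` then
receives every item `q + 1` times except `i - 1`, which it receives `q` times, while no bundle
contains more than `q + 1` copies of an item. Removing one copy of `i - 1` from any bundle
therefore leaves a bundle dominated item by item by agent `i`'s, and for goods the value of a
bundle is monotone in its multiplicities.
-/

open Finset

/-- The number of rounds in which agent `i` is matched to item `g`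
under the repeated matching `A` (a sequence of `T` bijections from agents to items). -/
def mult {α β : Type*} [DecidableEq β] {T : ℕ} (A : Fin T → α ≃ β) (i : α) (g : β) : ℕ :=
  (Finset.univ.filter fun t : Fin T => A t i = g).card

/-- The value of a bundle with multiplicities `B` under the valuation `v`,
where `v g t` is the value of the `t`-th copy of item `g`. -/
def bundleValue {β : Type*} [Fintype β] (v : β → ℕ → ℝ) (B : β → ℕ) : ℝ :=
  ∑ g : β, ∑ t ∈ Finset.range (B g), v g (t + 1)

/-- The social welfare of a repeated matching. -/
def SW {α β : Type*} [Fintype α] [Fintype β] [DecidableEq β] {T : ℕ}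
    (v : α → β → ℕ → ℝ) (A : Fin T → α ≃ β) : ℝ :=
  ∑ i : α, bundleValue (v i) (mult A i)

/-- Remove one copy of `g` from the bundle `B` (if present; otherwise leave `B` intact). -/
def removeOne {β : Type*} [DecidableEq β] (B : β → ℕ) (g : β) : β → ℕ :=
  fun g' => if g' = g then B g' - 1 else B g'

/-- `EF1`: every agent `i` values her bundle at least as much as any other agent `j`'s
bundle after removing one copy of some item. -/
def EF1 {α β : Type*} [Fintype β] [DecidableEq β] {T : ℕ}
    (v : α → β → ℕ → ℝ) (A : Fin T → α ≃ β) : Prop :=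
  ∀ i j : α, ∃ g : β,
    bundleValue (v i) (mult A i) ≥ bundleValue (v i) (removeOne (mult A j) g)

theorem Nat.count_eq_card_filter_univ_fin (p : ℕ → Prop) [DecidablePred p] (T : ℕ) :
    #{t : Fin T | p t} = Nat.count p T := by
  rw [Nat.count_eq_card_filter_range, ← Nat.Iio_eq_range, ← Fin.map_valEmbedding_univ,
    Finset.filter_map, Finset.card_map]
  rfl

theorem mult_le {α β : Type*} [DecidableEq β] {T : ℕ} (A : Fin T → α ≃ β) (i : α)
    (g : β) : mult A i g ≤ T :=
  (card_filter_le _ _).trans_eq (card_fin T)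

theorem bundleValue_mono {β : Type*} [Fintype β] {T : ℕ} {v : β → ℕ → ℝ}
    (hv : ∀ g t, 1 ≤ t → t ≤ T → 0 ≤ v g t) {B B' : β → ℕ} (hle : B ≤ B')
    (hT : ∀ g, B' g ≤ T) :
    bundleValue v B ≤ bundleValue v B' := by
  refine sum_le_sum fun g _ => sum_le_sum_of_subset_of_nonneg (range_subset_range.2 (hle g)) ?_
  intro t ht _
  exact hv g (t + 1) (by omega) (by have := mem_range.1 ht; have := hT g; omega)

section Cyclic

variable {n : ℕ} [NeZero n]

open Fin.NatCast

theorem Fin.val_sub_eq_sub_one_iff (i g : Fin n) : (g - i).val = n - 1 ↔ g = i - 1 := by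
  obtain ⟨m, rfl⟩ : ∃ m, n = m + 1 := Nat.exists_eq_add_one_of_ne_zero (NeZero.ne n)
  calc (g - i).val = m + 1 - 1 ↔ (g - i).val = (-1 : Fin (m + 1)).val := by
        rw [Fin.coe_neg_one, Nat.add_sub_cancel]
    _ ↔ g = i - 1 := by rw [Fin.val_inj, sub_eq_iff_eq_add', ← sub_eq_add_neg]

def cyclicMatching (n T : ℕ) [NeZero n] : Fin T → Fin n ≃ Fin n :=
  fun t => Equiv.addRight (t : Fin n)

theorem mult_cyclicMatching (T : ℕ) (i g : Fin n) :
    mult (cyclicMatching n T) i g = T / n + if (g - i).val < T % n then 1 else 0 := by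
  have hround (t : ℕ) : i + (t : Fin n) = g ↔ t ≡ (g - i).val [MOD n] := by
    rw [← eq_sub_iff_add_eq', Fin.ext_iff, Fin.val_natCast, Nat.ModEq,
      Nat.mod_eq_of_lt (g - i).isLt]
  simp only [mult, cyclicMatching, Equiv.coe_addRight, hround]
  rw [Nat.count_eq_card_filter_univ_fin (· ≡ (g - i).val [MOD n]),
    Nat.count_modEq_card _ (Nat.pos_of_neZero n), Nat.mod_eq_of_lt (g - i).isLt]

theorem removeOne_mult_cyclicMatching_le {T : ℕ} (hmod : T % n = n - 1) (i j : Fin n) :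
    removeOne (mult (cyclicMatching n T) j) (i - 1) ≤ mult (cyclicMatching n T) i := by
  intro g
  have hlt := (g - i).isLt
  simp only [removeOne, mult_cyclicMatching, hmod, ← Fin.val_sub_eq_sub_one_iff i g]
  generalize T / n = q
  split_ifs <;> omega

end Cyclic

/-- For goods (non-negative valuations) with `T mod n = n - 1`, an EF1 repeated
matching exists. -/
theorem stmt6 (n T : ℕ) (hn : 0 < n) (hmod : T % n = n - 1)
    (v : Fin n → Fin n → ℕ → ℝ)
    (hnonneg : ∀ (i g : Fin n) (t : ℕ), 1 ≤ t → t ≤ T → 0 ≤ v i g t) :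
    ∃ A : Fin T → Fin n ≃ Fin n, EF1 v A := by
  have : NeZero n := ⟨hn.ne'⟩
  refine ⟨cyclicMatching n T, fun i j => ⟨i - 1, ?_⟩⟩
  exact bundleValue_mono (hnonneg i) (removeOne_mult_cyclicMatching_le hmod i j)
    fun g => mult_le _ i g
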